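/- (Non-expansiveness of the first layer.) Assume σ : ℝ → ℝ satisfies |σ(a)−σ(b)| ≤ |a−b|, and define x⁽¹⁾[x](u,θ,α,λ) = σ( Σ_{λ'=1}^{M₀} ∫ x(u+u',λ') 2^{−2α} W_{λ',λ}(2^{−α}R_{−θ}u') du' + b(λ) ). Let B_{λ',λ} = ∫|W_{λ',λ}(u)|du, and B₁ = max{ sup_λ Σ_{λ'} B_{λ',λ}, (M₀/M₁) sup_{λ'} Σ_λ B_{λ',λ} }. Then for any two inputs x₁, x₂: ‖x⁽¹⁾[x₁] − x⁽¹⁾[x₂]‖ ≤ B₁ ‖x₁ − x₂‖, where ‖x‖² = (1/M₀)Σ_λ ∫|x(u,λ)|²du on inputs and ‖y‖² = sup_α (1/M₁)Σ_λ ∫_{S¹}∫_{ℝ²}|y(u,θ,α,λ)|²dudθ on outputs. -/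

import Mathlib

open MeasureTheory Real Complex

noncomputable section

instance : Fact (0 < 2 * Real.pi) := ⟨Real.two_pi_pos⟩
instance : MeasureSpace Real.Angle :=
  inferInstanceAs (MeasureSpace (AddCircle (2 * Real.pi)))

/-- Counterclockwise rotation by the angle `θ`, acting on the plane `ℝ² ≅ ℂ`. -/
def rot (θ : Real.Angle) (z : ℂ) : ℂ := (θ.toCircle : ℂ) * z

/-- The underlying set of the roto-scale-translation group `RST = (SO(2) × ℝ) ⋉ ℝ²`. -/
abbrev RST : Type := Real.Angle × ℝ × ℂ

/-- Group multiplication on `RST`: `(η, β, v) · (θ, α, u) = (θ + η, α + β, v + R_η 2^β u)`. -/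
def rstMul (g h : RST) : RST :=
  (h.1 + g.1, h.2.1 + g.2.1, g.2.2 + rot g.1 (((2:ℝ) ^ g.2.1) • h.2.2))
/-- Norm on input images: `‖x‖² = (1/M₀) Σ_{λ'} ∫ |x(u,λ')|² du`. -/
def inNorm (M₀ : ℕ) (x : ℂ → Fin M₀ → ℝ) : ℝ :=
  Real.sqrt ((M₀ : ℝ)⁻¹ * ∑ lam' : Fin M₀, ∫ u : ℂ, (x u lam') ^ 2)

/-- Norm on first-layer features:
`‖y‖² = sup_α (1/M₁) Σ_λ (1/2π) ∫_{S¹} ∫_{ℝ²} |y(u,θ,α,λ)|² du dθ`. -/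
def outNorm (M₁ : ℕ) (y : ℂ → Real.Angle → ℝ → Fin M₁ → ℝ) : ℝ :=
  Real.sqrt (⨆ α : ℝ, (M₁ : ℝ)⁻¹ * ∑ lam : Fin M₁,
    (2 * Real.pi)⁻¹ * ∫ θ : Real.Angle, ∫ u : ℂ, (y u θ α lam) ^ 2)

/-- The first layer of an RST-CNN. -/
def layer1 (M₀ M₁ : ℕ) (σ : ℝ → ℝ) (W : Fin M₀ → Fin M₁ → ℂ → ℝ) (b : Fin M₁ → ℝ)
    (x : ℂ → Fin M₀ → ℝ) : ℂ → Real.Angle → ℝ → Fin M₁ → ℝ :=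
  fun u θ α lam => σ ((∑ lam' : Fin M₀, ∫ u' : ℂ,
    x (u + u') lam' * ((2:ℝ) ^ (-(2*α)) * W lam' lam (((2:ℝ) ^ (-α)) • rot (-θ) u'))) + b lam)

/-!
For fixed `(θ, α, λ)` the first layer applies `σ` to a sum over `λ'` of correlations of
`x(·, λ')` with the filter `K = 2^{-2α} W_{λ',λ}(2^{-α} R_{-θ} ·)`, whose `L¹` norm is
`B_{λ',λ}` for every `θ` and `α`. As `σ` is 1-Lipschitz, `|y₁ - y₂|(u)` is at most
`Σ_{λ'} ∫ |x₁ - x₂|(u + v, λ') |K(v)| dv`. Cauchy–Schwarz with weight `|K|`, then over `λ'`,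
followed by Tonelli and translation invariance, gives
`∫ |y₁ - y₂|² ≤ (Σ_{λ'} B_{λ',λ}) Σ_{λ'} B_{λ',λ} ‖x₁ - x₂‖²_{λ'}` uniformly in `θ, α`.
Summing over `λ` is a Schur test with the row and column sums of `B`.

The estimates are carried out with lower Lebesgue integrals, so that neither `σ` nor the layer
output needs to be measurable.
-/

open scoped ENNReal

namespace ENNReal

variable {α : Type*} [MeasurableSpace α] {μ : Measure α}

theorem lintegral_sq_le_lintegral_mul_lintegral_of_sq_le_mul {r f g : α → ℝ≥0∞}
    (hf : AEMeasurable f μ) (hg : AEMeasurable g μ) (h : ∀ᵐ a ∂μ, r a ^ 2 ≤ f a * g a) :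
    (∫⁻ a, r a ∂μ) ^ 2 ≤ (∫⁻ a, f a ∂μ) * ∫⁻ a, g a ∂μ := by
  have sqrt_sq : ∀ x : ℝ≥0∞, (x ^ (2⁻¹ : ℝ)) ^ (2 : ℝ) = x := fun x => by
    rw [← ENNReal.rpow_mul]; norm_num
  have hr : ∀ᵐ a ∂μ, r a ≤ f a ^ (2⁻¹ : ℝ) * g a ^ (2⁻¹ : ℝ) := h.mono fun a ha => by
    rw [← ENNReal.mul_rpow_of_nonneg _ _ (by norm_num), ← ENNReal.rpow_le_rpow_iff two_pos,
      sqrt_sq, ENNReal.rpow_two]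
    exact ha
  have holder := ENNReal.lintegral_mul_le_Lp_mul_Lq μ Real.HolderConjugate.two_two
    (hf.pow_const (2⁻¹ : ℝ)) (hg.pow_const (2⁻¹ : ℝ))
  simp only [Pi.mul_apply, sqrt_sq, one_div] at holder
  calc (∫⁻ a, r a ∂μ) ^ 2
      ≤ ((∫⁻ a, f a ∂μ) ^ (2⁻¹ : ℝ) * (∫⁻ a, g a ∂μ) ^ (2⁻¹ : ℝ)) ^ 2 := by
        gcongr
        exact (lintegral_mono_ae hr).trans holder
    _ = (∫⁻ a, f a ∂μ) * ∫⁻ a, g a ∂μ := by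
        rw [mul_pow, ← ENNReal.rpow_two, ← ENNReal.rpow_two, sqrt_sq, sqrt_sq]

theorem sum_sq_le_sum_mul_sum_of_sq_le_mul {ι : Type*} [Fintype ι] {r f g : ι → ℝ≥0∞}
    (h : ∀ i, r i ^ 2 ≤ f i * g i) : (∑ i, r i) ^ 2 ≤ (∑ i, f i) * ∑ i, g i := by
  let _ : MeasurableSpace ι := ⊤
  have := lintegral_sq_le_lintegral_mul_lintegral_of_sq_le_mul (μ := Measure.count)
    measurable_from_top.aemeasurable measurable_from_top.aemeasurable
    (Filter.Eventually.of_forall h)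
  simpa only [lintegral_count, tsum_fintype] using this

end ENNReal

section Correlation

variable {G : Type*} [MeasurableSpace G] [AddCommGroup G] [MeasurableAdd₂ G]
  {μ : Measure G} [SFinite μ] [μ.IsAddLeftInvariant]

theorem aemeasurable_add_mul_prod {F k : G → ℝ≥0∞} (hF : AEMeasurable F μ)
    (hk : AEMeasurable k μ) : AEMeasurable (fun p : G × G => F (p.1 + p.2) * k p.2) (μ.prod μ) :=
  (hF.comp_quasiMeasurePreserving (quasiMeasurePreserving_add μ μ)).mul
    (hk.comp_quasiMeasurePreserving Measure.quasiMeasurePreserving_snd)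

theorem lintegral_lintegral_add_mul {F k : G → ℝ≥0∞} (hF : AEMeasurable F μ)
    (hk : AEMeasurable k μ) :
    ∫⁻ u, ∫⁻ v, F (u + v) * k v ∂μ ∂μ = (∫⁻ u, F u ∂μ) * ∫⁻ v, k v ∂μ := by
  rw [lintegral_lintegral_swap (aemeasurable_add_mul_prod hF hk)]
  have inner : ∀ v, ∫⁻ u, F (u + v) * k v ∂μ = (∫⁻ u, F u ∂μ) * k v := fun v => by
    rw [lintegral_mul_const'' (k v) (f := fun u => F (u + v))
      (hF.comp_quasiMeasurePreserving (measurePreserving_add_right μ v).quasiMeasurePreserving),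
      lintegral_add_right_eq_self F v]
  simp_rw [inner]
  exact lintegral_const_mul'' _ hk

theorem lintegral_sq_sum_lintegral_add_mul_le {ι : Type*} [Fintype ι] {F k : ι → G → ℝ≥0∞}
    (hF : ∀ i, AEMeasurable (F i) μ) (hk : ∀ i, AEMeasurable (k i) μ) :
    ∫⁻ u, (∑ i, ∫⁻ v, F i (u + v) * k i v ∂μ) ^ 2 ∂μ ≤
      (∑ i, ∫⁻ v, k i v ∂μ) * ∑ i, (∫⁻ v, k i v ∂μ) * ∫⁻ v, F i v ^ 2 ∂μ := by
  set q : ι → G → ℝ≥0∞ := fun i u => ∫⁻ v, F i (u + v) ^ 2 * k i v ∂μ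
  have hq : ∀ i, AEMeasurable (q i) μ := fun i =>
    (aemeasurable_add_mul_prod ((hF i).pow_const 2) (hk i)).lintegral_prod_right'
  -- Cauchy–Schwarz with weight `k i`, then over the finite index set
  have pointwise : ∀ u, (∑ i, ∫⁻ v, F i (u + v) * k i v ∂μ) ^ 2 ≤
      (∑ i, ∫⁻ v, k i v ∂μ) * ∑ i, q i u := fun u =>
    ENNReal.sum_sq_le_sum_mul_sum_of_sq_le_mul fun i =>
      ENNReal.lintegral_sq_le_lintegral_mul_lintegral_of_sq_le_mul (hk i)
        ((((hF i).comp_quasiMeasurePreserving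
          (measurePreserving_add_left μ u).quasiMeasurePreserving).pow_const 2).mul (hk i))
        (Filter.Eventually.of_forall fun v => le_of_eq (by ring))
  calc ∫⁻ u, (∑ i, ∫⁻ v, F i (u + v) * k i v ∂μ) ^ 2 ∂μ
      ≤ ∫⁻ u, (∑ i, ∫⁻ v, k i v ∂μ) * ∑ i, q i u ∂μ := lintegral_mono pointwise
    _ = (∑ i, ∫⁻ v, k i v ∂μ) * ∑ i, ∫⁻ u, q i u ∂μ := by
      rw [lintegral_const_mul'' _ (Finset.aemeasurable_fun_sum _ fun i _ => hq i),
        lintegral_finsetSum' _ fun i _ => hq i]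
    _ = (∑ i, ∫⁻ v, k i v ∂μ) * ∑ i, (∫⁻ v, k i v ∂μ) * ∫⁻ v, F i v ^ 2 ∂μ := by
      congr 1
      refine Finset.sum_congr rfl fun i _ => ?_
      rw [lintegral_lintegral_add_mul ((hF i).pow_const 2) (hk i), mul_comm]

end Correlation

theorem lintegral_comp_smul {E : Type*} [NormedAddCommGroup E] [NormedSpace ℝ E]
    [MeasurableSpace E] [BorelSpace E] [FiniteDimensional ℝ E] (μ : Measure E)
    [μ.IsAddHaarMeasure] (f : E → ℝ≥0∞) {r : ℝ} (hr : r ≠ 0) :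
    ∫⁻ x, f (r • x) ∂μ = ENNReal.ofReal |(r ^ Module.finrank ℝ E)⁻¹| * ∫⁻ x, f x ∂μ := by
  rw [← smul_eq_mul, ← lintegral_smul_measure, ← Measure.map_addHaar_smul μ hr]
  exact (lintegral_map_equiv f (Homeomorph.smulOfNeZero r hr).toMeasurableEquiv).symm

theorem measurePreserving_rot (θ : Real.Angle) : MeasurePreserving (rot θ) :=
  (rotation θ.toCircle).measurePreserving

-- The filter of `layer1`: its integrand is, definitionally, `x (u + u') lam' * rstKernel …`.
def rstKernel (W : ℂ → ℝ) (θ : Real.Angle) (α : ℝ) (u : ℂ) : ℝ :=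
  (2 : ℝ) ^ (-(2 * α)) * W (((2 : ℝ) ^ (-α)) • rot (-θ) u)

theorem quasiMeasurePreserving_smul_rot (θ : Real.Angle) {c : ℝ} (hc : c ≠ 0) :
    Measure.QuasiMeasurePreserving (fun u => c • rot θ u) :=
  (Measure.quasiMeasurePreserving_smul volume hc).comp
    (measurePreserving_rot θ).quasiMeasurePreserving

theorem aestronglyMeasurable_rstKernel {W : ℂ → ℝ} (hW : AEStronglyMeasurable W)
    (θ : Real.Angle) (α : ℝ) : AEStronglyMeasurable (rstKernel W θ α) :=
  (hW.comp_quasiMeasurePreserving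
    (quasiMeasurePreserving_smul_rot (-θ) (by positivity))).const_mul _

theorem lintegral_enorm_rstKernel (W : ℂ → ℝ) (θ : Real.Angle) (α : ℝ) :
    ∫⁻ u, ‖rstKernel W θ α u‖ₑ = ∫⁻ u, ‖W u‖ₑ := by
  obtain ⟨c, hc, hc_def⟩ : ∃ c : ℝ, 0 < c ∧ c = (2 : ℝ) ^ (-α) := ⟨_, by positivity, rfl⟩
  have hc2 : (2 : ℝ) ^ (-(2 * α)) = c ^ 2 := by
    rw [hc_def, ← Real.rpow_natCast, ← Real.rpow_mul zero_le_two]; ring_nf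
  have hc2_pos : 0 < c ^ 2 := by positivity
  simp only [rstKernel, ← hc_def, hc2, enorm_mul, Real.enorm_of_nonneg hc2_pos.le]
  rw [lintegral_const_mul' _ _ ENNReal.ofReal_ne_top,
    (measurePreserving_rot (-θ)).lintegral_comp_emb
      (rotation (-θ).toCircle).toHomeomorph.measurableEmbedding (fun z => ‖W (c • z)‖ₑ),
    lintegral_comp_smul volume (fun z => ‖W z‖ₑ) hc.ne', Complex.finrank_real_complex,
    abs_of_pos (inv_pos.2 hc2_pos), ← mul_assoc, ← ENNReal.ofReal_mul hc2_pos.le,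
    mul_inv_cancel₀ hc2_pos.ne', ENNReal.ofReal_one, one_mul]

section RealIntegrals

variable {α : Type*} [MeasurableSpace α] {μ : Measure α}

-- No integrability is assumed: if only one side is integrable, the right-hand side is `∞`.
theorem enorm_integral_sub_integral_le {E : Type*} [NormedAddCommGroup E] [NormedSpace ℝ E]
    {f g : α → E} (hf : AEStronglyMeasurable f μ) (hg : AEStronglyMeasurable g μ) :
    ‖∫ a, f a ∂μ - ∫ a, g a ∂μ‖ₑ ≤ ∫⁻ a, ‖f a - g a‖ₑ ∂μ := by
  by_cases hfg : Integrable (f - g) μ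
  · by_cases hf_int : Integrable f μ
    · have hg_int : Integrable g μ := by simpa using hf_int.sub hfg
      rw [← integral_sub hf_int hg_int]
      exact enorm_integral_le_lintegral_enorm _
    · have hg_int : ¬Integrable g μ := fun hg_int => hf_int (by simpa using hg_int.add hfg)
      simp [integral_undef hf_int, integral_undef hg_int]
  · have : ¬∫⁻ a, ‖f a - g a‖ₑ ∂μ < ⊤ := fun h => hfg ⟨hf.sub hg, h⟩
    rw [not_lt, top_le_iff] at this
    simp [this]

theorem ofReal_sq_eq_enorm_sq (x : ℝ) : ENNReal.ofReal (x ^ 2) = ‖x‖ₑ ^ 2 := by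
  rw [← Real.enorm_of_nonneg (sq_nonneg x), enorm_pow]

theorem integral_sq_le_of_lintegral_enorm_sq_le {f : α → ℝ} {C : ℝ} (hC : 0 ≤ C)
    (h : ∫⁻ a, ‖f a‖ₑ ^ 2 ∂μ ≤ ENNReal.ofReal C) : ∫ a, f a ^ 2 ∂μ ≤ C := by
  by_cases hf : Integrable (fun a => f a ^ 2) μ
  · rw [← ENNReal.ofReal_le_ofReal_iff hC,
      ofReal_integral_eq_lintegral_ofReal hf (Filter.Eventually.of_forall fun a => sq_nonneg _)]
    simpa only [ofReal_sq_eq_enorm_sq] using h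
  · rwa [integral_undef hf]

theorem MeasureTheory.MemLp.ofReal_integral_sq {f : α → ℝ} (hf : MemLp f 2 μ) :
    ENNReal.ofReal (∫ a, f a ^ 2 ∂μ) = ∫⁻ a, ‖f a‖ₑ ^ 2 ∂μ := by
  rw [ofReal_integral_eq_lintegral_ofReal hf.integrable_sq
    (Filter.Eventually.of_forall fun a => sq_nonneg _)]
  simp only [ofReal_sq_eq_enorm_sq]

end RealIntegrals

section Layer

variable {M₀ M₁ : ℕ} {σ : ℝ → ℝ} {W : Fin M₀ → Fin M₁ → ℂ → ℝ} {b : Fin M₁ → ℝ}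
  {x₁ x₂ : ℂ → Fin M₀ → ℝ}

theorem enorm_layer1_sub_le (hσ : LipschitzWith 1 σ)
    (hW : ∀ lam' lam, AEStronglyMeasurable (W lam' lam))
    (hx₁ : ∀ lam', AEStronglyMeasurable (fun u => x₁ u lam'))
    (hx₂ : ∀ lam', AEStronglyMeasurable (fun u => x₂ u lam'))
    (u : ℂ) (θ : Real.Angle) (α : ℝ) (lam : Fin M₁) :
    ‖layer1 M₀ M₁ σ W b x₁ u θ α lam - layer1 M₀ M₁ σ W b x₂ u θ α lam‖ₑ ≤
      ∑ lam', ∫⁻ v, ‖x₁ (u + v) lam' - x₂ (u + v) lam'‖ₑ * ‖rstKernel (W lam' lam) θ α v‖ₑ := by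
  have hshift : ∀ (x : ℂ → Fin M₀ → ℝ), (∀ lam', AEStronglyMeasurable (fun u => x u lam')) →
      ∀ lam', AEStronglyMeasurable (fun v => x (u + v) lam' * rstKernel (W lam' lam) θ α v) :=
    fun x hx lam' => ((hx lam').comp_quasiMeasurePreserving
      (measurePreserving_add_left volume u).quasiMeasurePreserving).mul
        (aestronglyMeasurable_rstKernel (hW lam' lam) θ α)
  calc ‖layer1 M₀ M₁ σ W b x₁ u θ α lam - layer1 M₀ M₁ σ W b x₂ u θ α lam‖ₑ
      ≤ ‖((∑ lam', ∫ v, x₁ (u + v) lam' * rstKernel (W lam' lam) θ α v) + b lam) -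
          ((∑ lam', ∫ v, x₂ (u + v) lam' * rstKernel (W lam' lam) θ α v) + b lam)‖ₑ := by
        have h := hσ.edist_le_mul
          ((∑ lam', ∫ v, x₁ (u + v) lam' * rstKernel (W lam' lam) θ α v) + b lam)
          ((∑ lam', ∫ v, x₂ (u + v) lam' * rstKernel (W lam' lam) θ α v) + b lam)
        rw [edist_eq_enorm_sub, edist_eq_enorm_sub, ENNReal.coe_one, one_mul] at h
        exact h
    _ = ‖∑ lam', ((∫ v, x₁ (u + v) lam' * rstKernel (W lam' lam) θ α v) -
          ∫ v, x₂ (u + v) lam' * rstKernel (W lam' lam) θ α v)‖ₑ := by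
        rw [add_sub_add_right_eq_sub, Finset.sum_sub_distrib]
    _ ≤ ∑ lam', ‖(∫ v, x₁ (u + v) lam' * rstKernel (W lam' lam) θ α v) -
          ∫ v, x₂ (u + v) lam' * rstKernel (W lam' lam) θ α v‖ₑ := enorm_sum_le _ _
    _ ≤ ∑ lam', ∫⁻ v, ‖x₁ (u + v) lam' * rstKernel (W lam' lam) θ α v -
          x₂ (u + v) lam' * rstKernel (W lam' lam) θ α v‖ₑ :=
        Finset.sum_le_sum fun lam' _ =>
          enorm_integral_sub_integral_le (hshift x₁ hx₁ lam') (hshift x₂ hx₂ lam')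
    _ = _ := by simp only [← sub_mul, enorm_mul]

theorem lintegral_enorm_layer1_sub_sq_le (hσ : LipschitzWith 1 σ)
    (hW : ∀ lam' lam, AEStronglyMeasurable (W lam' lam))
    (hx₁ : ∀ lam', AEStronglyMeasurable (fun u => x₁ u lam'))
    (hx₂ : ∀ lam', AEStronglyMeasurable (fun u => x₂ u lam'))
    (θ : Real.Angle) (α : ℝ) (lam : Fin M₁) :
    ∫⁻ u, ‖layer1 M₀ M₁ σ W b x₁ u θ α lam - layer1 M₀ M₁ σ W b x₂ u θ α lam‖ₑ ^ 2 ≤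
      (∑ lam', ∫⁻ v, ‖W lam' lam v‖ₑ) *
        ∑ lam', (∫⁻ v, ‖W lam' lam v‖ₑ) * ∫⁻ v, ‖x₁ v lam' - x₂ v lam'‖ₑ ^ 2 := by
  calc ∫⁻ u, ‖layer1 M₀ M₁ σ W b x₁ u θ α lam - layer1 M₀ M₁ σ W b x₂ u θ α lam‖ₑ ^ 2
      ≤ ∫⁻ u, (∑ lam', ∫⁻ v, ‖x₁ (u + v) lam' - x₂ (u + v) lam'‖ₑ *
          ‖rstKernel (W lam' lam) θ α v‖ₑ) ^ 2 :=
        lintegral_mono fun u => pow_le_pow_left₀ zero_le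
          (enorm_layer1_sub_le hσ hW hx₁ hx₂ u θ α lam) 2
    _ ≤ _ := by
        simpa only [lintegral_enorm_rstKernel] using
          lintegral_sq_sum_lintegral_add_mul_le (μ := volume)
            (F := fun lam' v => ‖x₁ v lam' - x₂ v lam'‖ₑ)
            (k := fun lam' v => ‖rstKernel (W lam' lam) θ α v‖ₑ)
            (fun lam' => ((hx₁ lam').sub (hx₂ lam')).enorm)
            (fun lam' => (aestronglyMeasurable_rstKernel (hW lam' lam) θ α).enorm)

theorem integral_layer1_sub_sq_le (hσ : LipschitzWith 1 σ)
    (hW : ∀ lam' lam, Integrable (W lam' lam))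
    (hx₁ : ∀ lam', MemLp (fun u => x₁ u lam') 2) (hx₂ : ∀ lam', MemLp (fun u => x₂ u lam') 2)
    (θ : Real.Angle) (α : ℝ) (lam : Fin M₁) :
    ∫ u, (layer1 M₀ M₁ σ W b x₁ u θ α lam - layer1 M₀ M₁ σ W b x₂ u θ α lam) ^ 2 ≤
      (∑ lam', ∫ v, |W lam' lam v|) *
        ∑ lam', (∫ v, |W lam' lam v|) * ∫ v, (x₁ v lam' - x₂ v lam') ^ 2 := by
  have hB : ∀ lam', 0 ≤ ∫ v, |W lam' lam v| := fun _ => integral_nonneg fun _ => abs_nonneg _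
  have hE : ∀ lam', 0 ≤ ∫ v, (x₁ v lam' - x₂ v lam') ^ 2 :=
    fun _ => integral_nonneg fun _ => sq_nonneg _
  have hBW : ∀ lam', ENNReal.ofReal (∫ v, |W lam' lam v|) = ∫⁻ v, ‖W lam' lam v‖ₑ :=
    fun lam' => by simpa only [Real.norm_eq_abs] using
      ofReal_integral_norm_eq_lintegral_enorm (hW lam' lam)
  have hEd : ∀ lam', ENNReal.ofReal (∫ v, (x₁ v lam' - x₂ v lam') ^ 2) =
      ∫⁻ v, ‖x₁ v lam' - x₂ v lam'‖ₑ ^ 2 :=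
    fun lam' => ((hx₁ lam').sub (hx₂ lam')).ofReal_integral_sq
  refine integral_sq_le_of_lintegral_enorm_sq_le
    (mul_nonneg (Finset.sum_nonneg fun _ _ => hB _)
      (Finset.sum_nonneg fun _ _ => mul_nonneg (hB _) (hE _))) ?_
  rw [ENNReal.ofReal_mul (Finset.sum_nonneg fun _ _ => hB _),
    ENNReal.ofReal_sum_of_nonneg fun _ _ => hB _,
    ENNReal.ofReal_sum_of_nonneg fun _ _ => mul_nonneg (hB _) (hE _)]
  simp only [fun lam' => ENNReal.ofReal_mul (q := ∫ v, (x₁ v lam' - x₂ v lam') ^ 2) (hB lam'),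
    hBW, hEd]
  exact lintegral_enorm_layer1_sub_sq_le hσ (fun lam' lam => (hW lam' lam).1)
    (fun lam' => (hx₁ lam').1) (fun lam' => (hx₂ lam').1) θ α lam

end Layer

instance : IsFiniteMeasure (volume : Measure Real.Angle) :=
  inferInstanceAs (IsFiniteMeasure (volume : Measure (AddCircle (2 * π))))

theorem Real.Angle.measureReal_univ : (volume : Measure Real.Angle).real Set.univ = 2 * π := by
  rw [measureReal_def, show (volume : Measure Real.Angle) Set.univ = ENNReal.ofReal (2 * π) from
    AddCircle.measure_univ (2 * π), ENNReal.toReal_ofReal Real.two_pi_pos.le]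

theorem Real.Angle.inv_two_pi_mul_integral_le {f : Real.Angle → ℝ} {C : ℝ} (hC : 0 ≤ C)
    (hf : ∀ θ, f θ ≤ C) : (2 * π)⁻¹ * ∫ θ, f θ ≤ C := by
  by_cases hint : Integrable f
  · calc (2 * π)⁻¹ * ∫ θ, f θ ≤ (2 * π)⁻¹ * ∫ _ : Real.Angle, C :=
          mul_le_mul_of_nonneg_left (integral_mono hint (integrable_const C) hf) (by positivity)
      _ = C := by
          rw [integral_const, Real.Angle.measureReal_univ, smul_eq_mul, ← mul_assoc,
            inv_mul_cancel₀ Real.two_pi_pos.ne', one_mul]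
  · rwa [integral_undef hint, mul_zero]

theorem sum_mul_sum_le_iSup_mul_iSup {ι κ : Type*} [Fintype ι] [Fintype κ] {B : ι → κ → ℝ}
    {E : ι → ℝ} (hB : ∀ i j, 0 ≤ B i j) (hE : ∀ i, 0 ≤ E i) :
    ∑ j, (∑ i, B i j) * ∑ i, B i j * E i ≤
      (⨆ j, ∑ i, B i j) * ((⨆ i, ∑ j, B i j) * ∑ i, E i) := by
  have hrow : ∀ j, ∑ i, B i j ≤ ⨆ j, ∑ i, B i j := fun j =>
    le_ciSup (f := fun j => ∑ i, B i j) (Set.finite_range _).bddAbove j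
  have hcol : ∀ i, ∑ j, B i j ≤ ⨆ i, ∑ j, B i j := fun i =>
    le_ciSup (f := fun i => ∑ j, B i j) (Set.finite_range _).bddAbove i
  calc ∑ j, (∑ i, B i j) * ∑ i, B i j * E i
      ≤ ∑ j, (⨆ j, ∑ i, B i j) * ∑ i, B i j * E i := by
        gcongr with j
        · exact Finset.sum_nonneg fun i _ => mul_nonneg (hB i j) (hE i)
        · exact hrow j
    _ = (⨆ j, ∑ i, B i j) * ∑ i, (∑ j, B i j) * E i := by
        rw [← Finset.mul_sum, Finset.sum_comm]
        simp only [Finset.sum_mul]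
    _ ≤ (⨆ j, ∑ i, B i j) * ∑ i, (⨆ i, ∑ j, B i j) * E i := by
        gcongr with i
        · exact Real.iSup_nonneg fun j => Finset.sum_nonneg fun i _ => hB i j
        · exact hE i
        · exact hcol i
    _ = (⨆ j, ∑ i, B i j) * ((⨆ i, ∑ j, B i j) * ∑ i, E i) := by
        rw [← Finset.mul_sum]

theorem layer1_nonexpansive_general (M₀ M₁ : ℕ)
    (σ : ℝ → ℝ) (hσ : ∀ a b : ℝ, |σ a - σ b| ≤ |a - b|)
    (W : Fin M₀ → Fin M₁ → ℂ → ℝ) (hW : ∀ lam' lam, Integrable (W lam' lam))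
    (b : Fin M₁ → ℝ) (x₁ x₂ : ℂ → Fin M₀ → ℝ)
    (hx₁ : ∀ lam', MemLp (fun u => x₁ u lam') 2 (volume : Measure ℂ))
    (hx₂ : ∀ lam', MemLp (fun u => x₂ u lam') 2 (volume : Measure ℂ))
    (B : Fin M₀ → Fin M₁ → ℝ) (hB : ∀ lam' lam, B lam' lam = ∫ u : ℂ, |W lam' lam u|)
    (B₁ : ℝ)
    (hB₁ : B₁ = max (⨆ lam : Fin M₁, ∑ lam' : Fin M₀, B lam' lam)
      (((M₀ : ℝ) / (M₁ : ℝ)) * ⨆ lam' : Fin M₀, ∑ lam : Fin M₁, B lam' lam)) :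
    outNorm M₁ (fun u θ α lam =>
        layer1 M₀ M₁ σ W b x₁ u θ α lam - layer1 M₀ M₁ σ W b x₂ u θ α lam) ≤
      B₁ * inNorm M₀ (fun u lam' => x₁ u lam' - x₂ u lam') := by
  set E : Fin M₀ → ℝ := fun lam' => ∫ u, (x₁ u lam' - x₂ u lam') ^ 2
  set S₁ := ⨆ lam : Fin M₁, ∑ lam' : Fin M₀, B lam' lam
  set S₂ := ⨆ lam' : Fin M₀, ∑ lam : Fin M₁, B lam' lam
  have hB_nonneg : ∀ lam' lam, 0 ≤ B lam' lam := fun lam' lam => by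
    rw [hB]; exact integral_nonneg fun _ => abs_nonneg _
  have hE_nonneg : ∀ lam', 0 ≤ E lam' := fun _ => integral_nonneg fun _ => sq_nonneg _
  have hS₁ : 0 ≤ S₁ := Real.iSup_nonneg fun _ => Finset.sum_nonneg fun _ _ => hB_nonneg _ _
  have hS₂ : 0 ≤ S₂ := Real.iSup_nonneg fun _ => Finset.sum_nonneg fun _ _ => hB_nonneg _ _
  have hB₁_nonneg : 0 ≤ B₁ := hS₁.trans (hB₁ ▸ le_max_left _ _)
  have hσ' : LipschitzWith 1 σ :=
    LipschitzWith.of_dist_le_mul fun a b => by simpa [Real.dist_eq] using hσ a b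
  have hlayer : ∀ α, (M₁ : ℝ)⁻¹ * ∑ lam, (2 * π)⁻¹ * ∫ θ : Real.Angle, ∫ u : ℂ,
      (layer1 M₀ M₁ σ W b x₁ u θ α lam - layer1 M₀ M₁ σ W b x₂ u θ α lam) ^ 2 ≤
      (M₁ : ℝ)⁻¹ * (S₁ * (S₂ * ∑ lam', E lam')) := fun α => by
    gcongr
    refine le_trans (Finset.sum_le_sum fun lam _ => Real.Angle.inv_two_pi_mul_integral_le
      (C := (∑ lam', B lam' lam) * ∑ lam', B lam' lam * E lam') ?_ fun θ => ?_)
      (sum_mul_sum_le_iSup_mul_iSup hB_nonneg hE_nonneg)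
    · exact mul_nonneg (Finset.sum_nonneg fun _ _ => hB_nonneg _ _)
        (Finset.sum_nonneg fun _ _ => mul_nonneg (hB_nonneg _ _) (hE_nonneg _))
    · simpa only [hB] using integral_layer1_sub_sq_le hσ' hW hx₁ hx₂ θ α lam
  have hconst : (M₁ : ℝ)⁻¹ * (S₁ * (S₂ * ∑ lam', E lam')) ≤
      B₁ ^ 2 * ((M₀ : ℝ)⁻¹ * ∑ lam', E lam') := by
    have hsplit : (M₁ : ℝ)⁻¹ * (S₁ * (S₂ * ∑ lam', E lam')) =
        S₁ * ((M₀ : ℝ) / M₁ * S₂) * ((M₀ : ℝ)⁻¹ * ∑ lam', E lam') := by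
      rcases eq_or_ne M₀ 0 with rfl | hM₀
      · simp
      · field_simp
    rw [hsplit, sq]
    gcongr
    · exact hB₁ ▸ le_max_left _ _
    · exact hB₁ ▸ le_max_right _ _
  unfold outNorm inNorm
  calc _ ≤ √(B₁ ^ 2 * ((M₀ : ℝ)⁻¹ * ∑ lam', E lam')) :=
        Real.sqrt_le_sqrt (Real.iSup_le (fun α => (hlayer α).trans hconst) (by positivity))
    _ = _ := by rw [Real.sqrt_mul (sq_nonneg _), Real.sqrt_sq hB₁_nonneg]

/-- non-expansiveness of the first layer. If `σ` is 1-Lipschitz,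
`B_{λ',λ} = ∫ |W_{λ',λ}|` and
`B₁ = max{ sup_λ Σ_{λ'} B_{λ',λ}, (M₀/M₁) sup_{λ'} Σ_λ B_{λ',λ} }`, then
`‖x⁽¹⁾[x₁] − x⁽¹⁾[x₂]‖ ≤ B₁ ‖x₁ − x₂‖`. -/
theorem layer1_nonexpansive (M₀ M₁ : ℕ) (hM₀ : 0 < M₀) (hM₁ : 0 < M₁)
    (σ : ℝ → ℝ) (hσ : ∀ a b : ℝ, |σ a - σ b| ≤ |a - b|)
    (W : Fin M₀ → Fin M₁ → ℂ → ℝ) (hW : ∀ lam' lam, Integrable (W lam' lam))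
    (b : Fin M₁ → ℝ) (x₁ x₂ : ℂ → Fin M₀ → ℝ)
    (hx₁ : ∀ lam', MemLp (fun u => x₁ u lam') 2 (volume : Measure ℂ))
    (hx₂ : ∀ lam', MemLp (fun u => x₂ u lam') 2 (volume : Measure ℂ))
    (B : Fin M₀ → Fin M₁ → ℝ) (hB : ∀ lam' lam, B lam' lam = ∫ u : ℂ, |W lam' lam u|)
    (B₁ : ℝ)
    (hB₁ : B₁ = max (⨆ lam : Fin M₁, ∑ lam' : Fin M₀, B lam' lam)
      (((M₀ : ℝ) / (M₁ : ℝ)) * ⨆ lam' : Fin M₀, ∑ lam : Fin M₁, B lam' lam)) :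
    outNorm M₁ (fun u θ α lam =>
        layer1 M₀ M₁ σ W b x₁ u θ α lam - layer1 M₀ M₁ σ W b x₂ u θ α lam) ≤
      B₁ * inNorm M₀ (fun u lam' => x₁ u lam' - x₂ u lam') :=
  layer1_nonexpansive_general M₀ M₁ σ hσ W hW b x₁ x₂ hx₁ hx₂ B hB B₁ hB₁
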